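/- arXiv:2405.14578 — 2 statements merged into one kernel-verified Lean document; each statement's English description precedes it below -/
import Mathlib

section
/- Let μ ∈ ℝ and σ > 0, and let X be a random variable with law gaussianReal μ σ² (the normal distribution with mean μ and variance σ²). Then E[sign(X)] = erf(μ/(√2·σ)), where erf(x) := (2/√π) ∫₀ˣ exp(−t²) dt and sign(x) is 1 for x > 0, −1 for x < 0, and 0 for x = 0. -/
open MeasureTheory ProbabilityTheory

/-- The Gauss error function. -/
noncomputable def erf (x : ℝ) : ℝ :=
  (2 / Real.sqrt Real.pi) * ∫ t in (0 : ℝ)..x, Real.exp (-t ^ 2)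

/-- For `X` Gaussian with mean `μ` and variance `σ²` (`σ > 0`),
`E[sign(X)] = erf(μ/(√2·σ))`. -/
theorem expectation_sign_gaussian {Ω : Type*} [MeasureSpace Ω]
    [IsProbabilityMeasure (volume : Measure Ω)] (μ σ : ℝ) (hσ : 0 < σ)
    (X : Ω → ℝ) (hX : Measurable X)
    (hlaw : Measure.map X volume = gaussianReal μ ⟨σ ^ 2, sq_nonneg σ⟩) :
    ∫ ω, Real.sign (X ω) = erf (μ / (Real.sqrt 2 * σ)) := by
  have hσ2 : (σ : ℝ) ^ 2 ≠ 0 := pow_ne_zero 2 hσ.ne'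
  set v : NNReal := ⟨σ ^ 2, sq_nonneg σ⟩ with hv_def
  have hvcoe : (v : ℝ) = σ ^ 2 := rfl
  have hv : v ≠ 0 := by
    intro h
    exact hσ2 (by rw [← hvcoe, h, NNReal.coe_zero])
  have hsign : Measurable Real.sign := by
    have hdef : Real.sign = fun r : ℝ => if r < 0 then (-1 : ℝ) else if 0 < r then 1 else 0 :=
      rfl
    rw [hdef]
    exact Measurable.ite measurableSet_Iio measurable_const
      (Measurable.ite measurableSet_Ioi measurable_const measurable_const)
  -- push to the law
  rw [← integral_map hX.aemeasurable hsign.aestronglyMeasurable, hlaw,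
    gaussianReal_of_var_ne_zero μ hv]
  -- express as integral against the density
  have h1 : ∫ x, Real.sign x ∂(volume.withDensity (gaussianPDF μ v))
      = ∫ x, gaussianPDFReal μ v x * Real.sign x := by
    rw [gaussianPDF_def]
    simp only [ENNReal.ofReal]
    rw [integral_withDensity_eq_integral_smul
      ((measurable_gaussianPDFReal μ v).real_toNNReal) Real.sign]
    congr 1
    ext x
    rw [NNReal.smul_def, smul_eq_mul, Real.coe_toNNReal _ (gaussianPDFReal_nonneg μ v x)]
  rw [h1]
  -- translate by μ
  have h2 : ∫ x, gaussianPDFReal μ v x * Real.sign x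
      = ∫ y, gaussianPDFReal 0 v y * Real.sign (y + μ) := by
    rw [← integral_add_right_eq_self (fun x => gaussianPDFReal μ v x * Real.sign x) μ]
    congr 1
    ext y
    rw [gaussianPDFReal_add, sub_self]
  rw [h2]
  have hp_int : Integrable (gaussianPDFReal 0 v) := integrable_gaussianPDFReal 0 v
  have hp_even : ∀ x : ℝ, gaussianPDFReal 0 v (-x) = gaussianPDFReal 0 v x := by
    intro x
    simp [gaussianPDFReal, neg_sq]
  -- split as difference of indicators
  have h3 : (fun y => gaussianPDFReal 0 v y * Real.sign (y + μ))
      = fun y => Set.indicator (Set.Ioi (-μ)) (gaussianPDFReal 0 v) y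
          - Set.indicator (Set.Iio (-μ)) (gaussianPDFReal 0 v) y := by
    funext y
    rcases lt_trichotomy y (-μ) with h | h | h
    · rw [Real.sign_of_neg (by linarith), Set.indicator_of_notMem (by simpa using h.not_gt),
        Set.indicator_of_mem (by simpa using h)]
      ring
    · rw [h]
      simp
    · rw [Real.sign_of_pos (by linarith), Set.indicator_of_mem (by simpa using h),
        Set.indicator_of_notMem (by simpa using (lt_asymm h))]
      ring
  rw [h3, integral_sub (hp_int.indicator measurableSet_Ioi) (hp_int.indicator measurableSet_Iio),
    integral_indicator measurableSet_Ioi, integral_indicator measurableSet_Iio]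
  have h5 : ∫ y in Set.Ioi (-μ), gaussianPDFReal 0 v y
      = ∫ y in Set.Iic μ, gaussianPDFReal 0 v y := by
    rw [← integral_comp_neg_Iic μ (gaussianPDFReal 0 v)]
    simp only [hp_even]
  have h6 : ∫ y in Set.Iio (-μ), gaussianPDFReal 0 v y
      = ∫ y in Set.Iic (-μ), gaussianPDFReal 0 v y :=
    (integral_Iic_eq_integral_Iio).symm
  rw [h5, h6, intervalIntegral.integral_Iic_sub_Iic hp_int.integrableOn hp_int.integrableOn]
  -- now compute the interval integral
  have hc : Real.sqrt 2 * σ ≠ 0 := by positivity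
  have hcsq : (Real.sqrt 2 * σ) ^ 2 = 2 * σ ^ 2 := by
    rw [mul_pow, Real.sq_sqrt (by norm_num : (2:ℝ) ≥ 0)]
  have hpdf_eq : ∀ x : ℝ, gaussianPDFReal 0 v x
      = (Real.sqrt (2 * Real.pi * σ ^ 2))⁻¹
          * Real.exp (-(x / (Real.sqrt 2 * σ)) ^ 2) := by
    intro x
    simp only [gaussianPDFReal, sub_zero, hvcoe]
    congr 1
    rw [div_pow, hcsq, neg_div]
  simp only [hpdf_eq]
  rw [intervalIntegral.integral_const_mul]
  have h7 : (∫ x in (-μ)..μ, Real.exp (-(x / (Real.sqrt 2 * σ)) ^ 2))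
      = (Real.sqrt 2 * σ) • ∫ t in (-μ) / (Real.sqrt 2 * σ)..μ / (Real.sqrt 2 * σ),
          Real.exp (-t ^ 2) :=
    intervalIntegral.integral_comp_div (fun t => Real.exp (-t ^ 2)) hc
  rw [h7]
  set d : ℝ := μ / (Real.sqrt 2 * σ) with hd
  have hnd : (-μ) / (Real.sqrt 2 * σ) = -d := by rw [hd, neg_div]
  rw [hnd]
  have hInt : ∀ a b : ℝ, IntervalIntegrable (fun t => Real.exp (-t ^ 2)) volume a b :=
    fun a b => (Real.continuous_exp.comp ((continuous_pow 2).neg)).intervalIntegrable a b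
  have h8 : (∫ t in (-d)..d, Real.exp (-t ^ 2))
      = 2 * ∫ t in (0:ℝ)..d, Real.exp (-t ^ 2) := by
    rw [← intervalIntegral.integral_add_adjacent_intervals (hInt (-d) 0) (hInt 0 d)]
    have : (∫ t in (-d)..(0:ℝ), Real.exp (-t ^ 2))
        = ∫ t in (0:ℝ)..d, Real.exp (-t ^ 2) := by
      rw [show (∫ t in (0:ℝ)..d, Real.exp (-t ^ 2))
          = ∫ t in (0:ℝ)..d, Real.exp (-(-t) ^ 2) by simp,
        intervalIntegral.integral_comp_neg (fun t => Real.exp (-t ^ 2))]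
      norm_num
    rw [this]
    ring
  rw [h8]
  -- final constant arithmetic
  have hsqrt : Real.sqrt (2 * Real.pi * σ ^ 2)
      = Real.sqrt 2 * Real.sqrt Real.pi * σ := by
    rw [Real.sqrt_mul (by positivity), Real.sqrt_mul (by norm_num : (2:ℝ) ≥ 0),
      Real.sqrt_sq hσ.le]
  rw [erf, hsqrt, smul_eq_mul]
  have hπ : Real.sqrt Real.pi ≠ 0 := by positivity
  have h2' : Real.sqrt 2 ≠ 0 := by positivity
  field_simp
end

section
/- Let μ ∈ ℝ and σ > 0, and let X be a random variable with law gaussianReal μ σ² (the normal distribution with mean μ and variance σ²). Then Var(sign(X)) = 1 − erf(μ/(√2·σ))², where erf(x) := (2/√π) ∫₀ˣ exp(−t²) dt and sign(x) is 1 for x > 0, −1 for x < 0, and 0 for x = 0. -/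
/-!
A Gaussian has no atom at `0`, so `sign X ^ 2 = 1` almost surely and
`Var (sign X) = 1 - (E sign X) ^ 2`. The reflection `x ↦ 2μ - x` preserves the law of `X` and maps
`(-∞, 0)` onto `(2μ, ∞)`, so `E sign X = P(X > 0) - P(X > 2μ)` is the integral of the density over
`[0, 2μ]`. The substitution `t = (x - μ) / √(2σ²)` turns it into `(1/√π) ∫_{-a}^{a} exp(-t²) dt`
with `a = μ / √(2σ²)`, which is `erf a` by evenness.
-/

open MeasureTheory ProbabilityTheory

open Set Real
open scoped NNReal

namespace Real

lemma sign_eq_indicator_sub_indicator :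
    Real.sign = (Ioi 0).indicator 1 - (Iio 0).indicator 1 := by
  ext x
  rcases lt_trichotomy x 0 with hx | rfl | hx
  · simp [sign_of_neg hx, hx, hx.not_gt]
  · simp
  · simp [sign_of_pos hx, hx, hx.not_gt]

lemma measurable_sign : Measurable Real.sign := by
  rw [sign_eq_indicator_sub_indicator]
  exact (measurable_const.indicator measurableSet_Ioi).sub
    (measurable_const.indicator measurableSet_Iio)

lemma sign_sq_of_ne_zero {x : ℝ} (hx : x ≠ 0) : Real.sign x ^ 2 = 1 := by
  rcases sign_apply_eq_of_ne_zero x hx with h | h <;> simp [h]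

end Real

lemma integral_sign (ν : Measure ℝ) [IsFiniteMeasure ν] :
    ∫ x, Real.sign x ∂ν = ν.real (Ioi 0) - ν.real (Iio 0) := by
  rw [Real.sign_eq_indicator_sub_indicator, Pi.sub_def, integral_sub
      ((integrable_const 1).indicator measurableSet_Ioi)
      ((integrable_const 1).indicator measurableSet_Iio),
    integral_indicator_one measurableSet_Ioi, integral_indicator_one measurableSet_Iio]

lemma variance_sign_of_ae_ne_zero {Ω : Type*} [MeasurableSpace Ω] {P : Measure Ω}
    [IsProbabilityMeasure P] {X : Ω → ℝ} (hX : AEMeasurable X P) (hX0 : ∀ᵐ ω ∂P, X ω ≠ 0) :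
    variance (fun ω => Real.sign (X ω)) P = 1 - (∫ ω, Real.sign (X ω) ∂P) ^ 2 := by
  have hmem : MemLp (fun ω => Real.sign (X ω)) 2 P := by
    refine MemLp.of_bound (Real.measurable_sign.comp_aemeasurable hX).aestronglyMeasurable 1
      (Filter.Eventually.of_forall fun ω => ?_)
    rcases Real.sign_apply_eq (X ω) with h | h | h <;> simp [h]
  have hsq : ∫ ω, Real.sign (X ω) ^ 2 ∂P = 1 := by
    rw [integral_congr_ae (hX0.mono fun ω => Real.sign_sq_of_ne_zero)]
    simp
  rw [variance_eq_sub hmem]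
  simp only [Pi.pow_apply, hsq]

section Gaussian

variable {μ : ℝ} {v : ℝ≥0}

lemma gaussianReal_map_two_mul_sub : (gaussianReal μ v).map (2 * μ - ·) = gaussianReal μ v := by
  rw [gaussianReal_map_const_sub]
  ring_nf

lemma gaussianReal_real_Iio_eq_real_Ioi (a : ℝ) :
    (gaussianReal μ v).real (Iio a) = (gaussianReal μ v).real (Ioi (2 * μ - a)) := by
  conv_lhs => rw [← gaussianReal_map_two_mul_sub]
  rw [map_measureReal_apply (by fun_prop) measurableSet_Iio]
  congr 1
  ext x
  simp

lemma gaussianReal_real_eq_setIntegral (hv : v ≠ 0) (s : Set ℝ) :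
    (gaussianReal μ v).real s = ∫ x in s, gaussianPDFReal μ v x := by
  rw [measureReal_def, gaussianReal_apply_eq_integral μ hv, ENNReal.toReal_ofReal
    (integral_nonneg fun x => gaussianPDFReal_nonneg μ v x)]

lemma gaussianReal_real_Ioi_sub_Ioi (hv : v ≠ 0) (a b : ℝ) :
    (gaussianReal μ v).real (Ioi a) - (gaussianReal μ v).real (Ioi b)
      = ∫ x in a..b, gaussianPDFReal μ v x := by
  rw [gaussianReal_real_eq_setIntegral hv, gaussianReal_real_eq_setIntegral hv,
    intervalIntegral.integral_Ioi_sub_Ioi' (integrable_gaussianPDFReal μ v).integrableOn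
      (integrable_gaussianPDFReal μ v).integrableOn]

lemma gaussianPDFReal_eq_mul_exp_neg_sq (x : ℝ) :
    gaussianPDFReal μ v x
      = (√π)⁻¹ * (√(2 * v))⁻¹ * exp (-(x / √(2 * v) - μ / √(2 * v)) ^ 2) := by
  have h2v : (0 : ℝ) ≤ 2 * v := by positivity
  rw [gaussianPDFReal, mul_comm 2 π, mul_assoc, Real.sqrt_mul' π h2v, mul_inv, ← sub_div,
    div_pow, Real.sq_sqrt h2v, neg_div]

lemma intervalIntegral_gaussianPDFReal (a b : ℝ) :
    ∫ x in a..b, gaussianPDFReal μ v x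
      = (√π)⁻¹ * ∫ t in (a - μ) / √(2 * v)..(b - μ) / √(2 * v), exp (-t ^ 2) := by
  simp_rw [gaussianPDFReal_eq_mul_exp_neg_sq, intervalIntegral.integral_const_mul, mul_assoc,
    ← smul_eq_mul (a := (√(2 * (v : ℝ)))⁻¹),
    intervalIntegral.inv_smul_integral_comp_div_sub (fun t => exp (-t ^ 2)), sub_div]

lemma erf_eq_inv_sqrt_pi_mul_integral_neg_self (a : ℝ) :
    erf a = (√π)⁻¹ * ∫ t in -a..a, exp (-t ^ 2) := by
  have hcont : Continuous fun t : ℝ => exp (-t ^ 2) := by fun_prop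
  have heven : ∫ t in -a..0, exp (-t ^ 2) = ∫ t in 0..a, exp (-t ^ 2) := by
    have := intervalIntegral.integral_comp_neg (a := 0) (b := a) fun t => exp (-t ^ 2)
    simpa only [neg_sq, neg_zero] using this.symm
  rw [erf, ← intervalIntegral.integral_add_adjacent_intervals (hcont.intervalIntegrable (-a) 0)
    (hcont.intervalIntegrable 0 _), heven]
  ring

lemma integral_sign_gaussianReal (hv : v ≠ 0) :
    ∫ x, Real.sign x ∂gaussianReal μ v = erf (μ / √(2 * v)) := by
  rw [integral_sign, gaussianReal_real_Iio_eq_real_Ioi, gaussianReal_real_Ioi_sub_Ioi hv,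
    intervalIntegral_gaussianPDFReal, erf_eq_inv_sqrt_pi_mul_integral_neg_self]
  congr 3 <;> ring

end Gaussian

/-- For `X` Gaussian with mean `μ` and variance `σ²` (`σ > 0`),
`Var(sign(X)) = 1 − erf(μ/(√2·σ))²`. -/
theorem variance_sign_gaussian {Ω : Type*} [MeasureSpace Ω]
    [IsProbabilityMeasure (volume : Measure Ω)] (μ σ : ℝ) (hσ : 0 < σ)
    (X : Ω → ℝ) (hX : Measurable X)
    (hlaw : Measure.map X volume = gaussianReal μ ⟨σ ^ 2, sq_nonneg σ⟩) :
    Var[fun ω => Real.sign (X ω)] = 1 - erf (μ / (Real.sqrt 2 * σ)) ^ 2 := by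
  have hv : (⟨σ ^ 2, sq_nonneg σ⟩ : ℝ≥0) ≠ 0 := by
    simpa [← NNReal.coe_eq_zero] using hσ.ne'
  have := nullSingletonClass_gaussianReal (μ := μ) hv
  have hX0 : ∀ᵐ ω, X ω ≠ 0 :=
    ae_of_ae_map hX.aemeasurable (by rw [hlaw]; exact Measure.ae_ne _ 0)
  have hmean : ∫ ω, Real.sign (X ω) = erf (μ / (√2 * σ)) := by
    rw [← integral_map hX.aemeasurable Real.measurable_sign.aestronglyMeasurable, hlaw,
      integral_sign_gaussianReal hv]
    congr 2
    change √(2 * σ ^ 2) = √2 * σ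
    rw [Real.sqrt_mul zero_le_two, Real.sqrt_sq hσ.le]
  rw [variance_sign_of_ae_ne_zero hX.aemeasurable hX0, hmean]
end
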